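/- Let D be a finite digraph of order n with minimum in-degree δ⁻(D) = δ⁻ ≥ 1. Then L₂(D) ≤ 2n/(δ⁻ + 1), i.e., (δ⁻ + 1) · L₂(D) ≤ 2n. -/

import Mathlib

open Finset

variable {V : Type*}

/-- The out-degree of `v` in the digraph with arc relation `A`. -/
def outDeg [Fintype V] (A : V → V → Prop) [DecidableRel A] (v : V) : ℕ :=
  (Finset.univ.filter fun u => A v u).card

/-- The in-degree of `v` in the digraph with arc relation `A`. -/
def inDeg [Fintype V] (A : V → V → Prop) [DecidableRel A] (v : V) : ℕ :=
  (Finset.univ.filter fun u => A u v).card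

/-- The minimum in-degree `δ⁻` of the digraph. -/
noncomputable def minInDeg [Fintype V] (A : V → V → Prop) [DecidableRel A] : ℕ :=
  sInf (Set.range fun v => inDeg A v)

/-- The maximum out-degree `Δ⁺` of the digraph. -/
noncomputable def maxOutDeg [Fintype V] (A : V → V → Prop) [DecidableRel A] : ℕ :=
  sSup (Set.range fun v => outDeg A v)

/-- The converse digraph `D⁻¹`, obtained by reversing every arc. -/
def converse (A : V → V → Prop) : V → V → Prop := fun u v => A v u

instance converseDecidable (A : V → V → Prop) [h : DecidableRel A] :
    DecidableRel (converse A) := fun u v => h v u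

/-- `B` is a `k`-limited packing: `|N⁺[v] ∩ B| ≤ k` for every vertex `v`. -/
def IsLimitedPacking [DecidableEq V] (A : V → V → Prop) [DecidableRel A] (k : ℕ)
    (B : Finset V) : Prop :=
  ∀ v : V, (B.filter fun u => u = v ∨ A v u).card ≤ k

/-- The `k`-limited packing number `L_k(D)` (`k = 1` gives the packing number `ρ(D)`). -/
noncomputable def limitedPackingNumber [Fintype V] [DecidableEq V] (A : V → V → Prop) [DecidableRel A]
    (k : ℕ) : ℕ :=
  sSup {m | ∃ B : Finset V, IsLimitedPacking A k B ∧ B.card = m}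

/-- `S` is an `r`-tuple dominating set: every vertex is dominated by at least `r`
vertices of `S` (where `u` dominates `v` if `u = v` or `(u,v)` is an arc). -/
def IsTupleDominating [DecidableEq V] (A : V → V → Prop) [DecidableRel A] (r : ℕ)
    (S : Finset V) : Prop :=
  ∀ v : V, r ≤ (S.filter fun u => u = v ∨ A u v).card

/-- The `r`-tuple domination number `γ×r(D)` (`r = 1` gives the domination number `γ(D)`,
`r = 2` the double domination number `γ×₂(D)`). -/
noncomputable def tupleDominationNumber [Fintype V] [DecidableEq V] (A : V → V → Prop) [DecidableRel A]
    (r : ℕ) : ℕ :=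
  sInf {m | ∃ S : Finset V, IsTupleDominating A r S ∧ S.card = m}

/-- `S` is a total 2-dominating set: the subdigraph induced by `S` has no isolated
vertices, and every vertex outside `S` has at least two in-neighbors in `S`. -/
def IsTotal2Dominating [DecidableEq V] (A : V → V → Prop) [DecidableRel A]
    (S : Finset V) : Prop :=
  (∀ v ∈ S, ∃ u ∈ S, u ≠ v ∧ (A u v ∨ A v u)) ∧
    ∀ v : V, v ∉ S → 2 ≤ (S.filter fun u => A u v).card

/-- The total 2-domination number `γ×₂ᵗ(D)`. -/
noncomputable def total2DominationNumber [Fintype V] [DecidableEq V] (A : V → V → Prop)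
    [DecidableRel A] : ℕ :=
  sInf {m | ∃ S : Finset V, IsTotal2Dominating A S ∧ S.card = m}

/-- `B` is a total 2-limited packing: every vertex of `B` is adjacent with at most one
vertex of `B`, and every vertex outside `B` has at most two out-neighbors in `B`. -/
def IsTotal2LimitedPacking [DecidableEq V] (A : V → V → Prop) [DecidableRel A]
    (B : Finset V) : Prop :=
  (∀ v ∈ B, (B.filter fun u => u ≠ v ∧ (A u v ∨ A v u)).card ≤ 1) ∧
    ∀ v : V, v ∉ B → (B.filter fun u => A v u).card ≤ 2

/-- The total 2-limited packing number `L₂ᵗ(D)`. -/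
noncomputable def total2LimitedPackingNumber [Fintype V] [DecidableEq V] (A : V → V → Prop)
    [DecidableRel A] : ℕ :=
  sSup {m | ∃ B : Finset V, IsTotal2LimitedPacking A B ∧ B.card = m}

/-- An end-vertex: a vertex `v` with `deg⁺(v) + deg⁻(v) = 1`. -/
def IsEndVertex [Fintype V] (A : V → V → Prop) [DecidableRel A] (v : V) : Prop :=
  outDeg A v + inDeg A v = 1

/-- A penultimate vertex: a vertex adjacent with an end-vertex. -/
def IsPenultimate [Fintype V] (A : V → V → Prop) [DecidableRel A] (v : V) : Prop :=
  ∃ u : V, IsEndVertex A u ∧ (A u v ∨ A v u)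

namespace LimitedPacking

variable [Fintype V] (A : V → V → Prop) [DecidableRel A]

theorem minInDeg_le_inDeg (u : V) : minInDeg A ≤ inDeg A u :=
  Nat.sInf_le ⟨u, rfl⟩

theorem card_closedInNbhd [DecidableEq V] (hloopless : ∀ v : V, ¬ A v v) (u : V) :
    #{v | u = v ∨ A v u} = inDeg A u + 1 := by
  rw [filter_or, card_union_of_disjoint]
  · simp [filter_eq, inDeg, Nat.add_comm]
  · simp only [disjoint_left, mem_filter]
    rintro v ⟨_, rfl⟩ ⟨_, h⟩
    exact hloopless _ h

/-- Each vertex of `B` lies in at least `δ⁻ + 1` closed out-neighbourhoods, while each closed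
out-neighbourhood meets `B` in at most `k` vertices. -/
theorem IsLimitedPacking.card_mul_le [DecidableEq V] (hloopless : ∀ v : V, ¬ A v v) {k : ℕ}
    {B : Finset V} (hB : IsLimitedPacking A k B) :
    (minInDeg A + 1) * #B ≤ k * Fintype.card V := by
  have h := card_nsmul_le_card_nsmul (s := B) (t := univ) (m := minInDeg A + 1) (n := k)
    (fun u v => u = v ∨ A v u)
    (fun u _ => by
      rw [bipartiteAbove, card_closedInNbhd A hloopless]
      exact Nat.succ_le_succ (minInDeg_le_inDeg A u))
    (fun v _ => hB v)
  simpa only [smul_eq_mul, card_univ, mul_comm] using h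

theorem exists_isLimitedPacking_card_eq [DecidableEq V] (k : ℕ) :
    ∃ B : Finset V, IsLimitedPacking A k B ∧ #B = limitedPackingNumber A k := by
  have hne : {m | ∃ B : Finset V, IsLimitedPacking A k B ∧ #B = m}.Nonempty :=
    ⟨0, ∅, fun v => by simp, rfl⟩
  have hbdd : BddAbove {m | ∃ B : Finset V, IsLimitedPacking A k B ∧ #B = m} :=
    ⟨Fintype.card V, by rintro m ⟨B, _, rfl⟩; exact B.card_le_univ⟩
  exact Nat.sSup_mem hne hbdd

end LimitedPacking

open LimitedPacking in
theorem stmt3_general {V : Type*} [Fintype V] [DecidableEq V] (A : V → V → Prop) [DecidableRel A]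
    (hloopless : ∀ v : V, ¬ A v v) (n : ℕ) (hn : Fintype.card V = n) :
    (minInDeg A + 1) * limitedPackingNumber A 2 ≤ 2 * n := by
  obtain ⟨B, hB, hBcard⟩ := exists_isLimitedPacking_card_eq A 2
  rw [← hBcard, ← hn]
  exact hB.card_mul_le A hloopless

/-- If `δ⁻(D) ≥ 1`, then `(δ⁻ + 1) · L₂(D) ≤ 2n`. -/
theorem stmt3 {V : Type*} [Fintype V] [DecidableEq V] (A : V → V → Prop) [DecidableRel A]
    (hloopless : ∀ v : V, ¬ A v v) (n : ℕ) (hn : Fintype.card V = n)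
    (hδ : 1 ≤ minInDeg A) :
    (minInDeg A + 1) * limitedPackingNumber A 2 ≤ 2 * n :=
  stmt3_general A hloopless n hn
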